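/- Let 0 < γ ≤ δ ≤ 1/9 and let ω be the explicit modulus of continuity ω(ξ) = ξ − ξ^{3/2} for 0 ≤ ξ ≤ δ and ω(ξ) = δ − δ^{3/2} + γ log(1 + (1/4) log(ξ/δ)) for ξ > δ; for B > 0 set ω_B(ξ) = ω(Bξ). Let 0 ≤ T < T₁ and let Θ : ℝ² × [0,T₁] → ℝ be continuous, 2π-periodic in each space variable, such that the spatial gradient ∇Θ exists everywhere and is jointly continuous on ℝ² × [0,T₁]. Assume that Θ(·,T) has strict modulus of continuity ω_B, i.e. |Θ(x,T) − Θ(y,T)| < ω_B(|x−y|) for all x ≠ y, and that sup_{x∈ℝ²} |∇Θ(x,T)| < B. Then there exists τ ∈ (0, T₁ − T] such that for every t ∈ [T, T+τ], Θ(·,t) has strict modulus of continuity ω_B. -/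

import Mathlib

open Real

noncomputable section

abbrev Plane := EuclideanSpace ℝ (Fin 2)

/-- `2π`-periodicity in each variable. -/
def Periodic2 {α : Type*} (f : Plane → α) : Prop :=
  ∀ (x : Plane) (i : Fin 2), f (x + (2 * Real.pi) • EuclideanSpace.single i (1:ℝ)) = f x

/-- The explicit modulus of continuity of Kiselev–Nazarov–Volberg:
`ω(ξ) = ξ − ξ^{3/2}` for `0 ≤ ξ ≤ δ`, and
`ω(ξ) = δ − δ^{3/2} + γ log(1 + (1/4) log(ξ/δ))` for `ξ > δ`. -/
def qgModulus (γ δ : ℝ) (ξ : ℝ) : ℝ :=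
  if ξ ≤ δ then ξ - ξ ^ ((3:ℝ)/2)
  else δ - δ ^ ((3:ℝ)/2) + γ * Real.log (1 + (1/4) * Real.log (ξ / δ))

/-! At time `T` the strict inequality can only be lost in three regimes, each excluded for a short
time. Near the diagonal, `ω_B'(0) = B` exceeds a bound `B' < B` on the gradient, which persists by
continuity in time, so the mean value inequality wins. Far from the diagonal, `ω` is unbounded and
eventually exceeds `2 sup |Θ|`. In between, periodicity reduces the pairs `(x, y)` to a compact set,
where the strict inequality at time `T` holds with a uniform margin `ε`, and `Θ(·, t)` stays
`ε/2`-close to `Θ(·, T)` uniformly in space for `t` near `T`. -/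

open Set Filter Topology Metric

theorem continuous_qgModulus {γ δ : ℝ} (hδ : 0 < δ) : Continuous (qgModulus γ δ) := by
  refine continuous_if_le continuous_id continuous_const ?_ ?_ ?_
  · exact (continuous_id.sub (continuous_rpow_const (by norm_num))).continuousOn
  · intro ξ (hξ : δ ≤ ξ)
    have hlog_nonneg : 0 ≤ Real.log (ξ / δ) := Real.log_nonneg ((one_le_div hδ).2 hξ)
    refine (continuousAt_const.add (continuousAt_const.mul (ContinuousAt.log ?_ ?_)))
      |>.continuousWithinAt
    · exact continuousAt_const.add <| continuousAt_const.mul <|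
        (continuousAt_id.div_const δ).log (div_pos (hδ.trans_le hξ) hδ).ne'
    · positivity
  · rintro ξ rfl
    simp [div_self hδ.ne']

theorem eventually_mul_lt_qgModulus {γ δ c : ℝ} (hδ : 0 < δ) (hc : c < 1) :
    ∀ᶠ u in 𝓝[>] 0, c * u < qgModulus γ δ u := by
  have hpos : 0 < min δ ((1 - c) ^ 2) := lt_min hδ (by nlinarith)
  filter_upwards [Ioo_mem_nhdsGT hpos] with u ⟨hu0, hu⟩
  have hsqrt : √u < 1 - c := by
    rw [Real.sqrt_lt' (by linarith)]
    exact hu.trans_le (min_le_right _ _)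
  have hpow : u ^ ((3 : ℝ) / 2) = u * √u := by
    rw [Real.sqrt_eq_rpow, ← Real.rpow_one_add' hu0.le (by norm_num)]
    norm_num
  rw [qgModulus, if_pos (hu.le.trans (min_le_left _ _)), hpow]
  nlinarith

theorem tendsto_qgModulus_atTop {γ δ : ℝ} (hγ : 0 < γ) (hδ : 0 < δ) :
    Tendsto (qgModulus γ δ) atTop atTop := by
  have hlog : Tendsto (fun ξ => Real.log (1 + 1 / 4 * Real.log (ξ / δ))) atTop atTop :=
    Real.tendsto_log_atTop.comp <| tendsto_atTop_add_const_left _ _ <|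
      (Real.tendsto_log_atTop.comp (tendsto_id.atTop_div_const hδ)).const_mul_atTop (by norm_num)
  refine (tendsto_atTop_add_const_left _ (δ - δ ^ ((3 : ℝ) / 2))
    (hlog.const_mul_atTop hγ)).congr' ?_
  filter_upwards [eventually_gt_atTop δ] with ξ hξ
  rw [qgModulus, if_neg hξ.not_ge]

theorem Periodic2.periodic {α : Type*} {f : Plane → α} (hf : Periodic2 f) (i : Fin 2) :
    Function.Periodic f ((2 * π) • EuclideanSpace.single i (1 : ℝ)) :=
  fun x => hf x i

theorem Periodic2.fderiv {F : Type*} [NormedAddCommGroup F] [NormedSpace ℝ F] {f : Plane → F}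
    (hf : Periodic2 f) : Periodic2 (fderiv ℝ f) := by
  intro x i
  rw [← fderiv_comp_add_right, funext fun y => hf y i]

def periodVec (m : Fin 2 → ℤ) : Plane :=
  ∑ i, m i • (2 * π) • EuclideanSpace.single i (1 : ℝ)

theorem Periodic2.periodic_periodVec {α : Type*} {f : Plane → α} (hf : Periodic2 f)
    (m : Fin 2 → ℤ) : Function.Periodic f (periodVec m) :=
  Finset.sum_induction _ (Function.Periodic f) (fun _ _ => Function.Periodic.add_period)
    (fun _ => by rw [add_zero]) fun i _ => (hf.periodic i).zsmul (m i)

theorem periodVec_apply (m : Fin 2 → ℤ) (j : Fin 2) : periodVec m j = 2 * π * m j := by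
  fin_cases j <;> simp [periodVec] <;> ring

theorem exists_norm_sub_periodVec_le (x : Plane) : ∃ m, ‖x - periodVec m‖ ≤ 4 * π := by
  set m : Fin 2 → ℤ := fun j => ⌊x j / (2 * π)⌋
  have hcoord (j : Fin 2) : ‖(x - periodVec m) j‖ ≤ 2 * π := by
    have h : (x - periodVec m) j = 2 * π * Int.fract (x j / (2 * π)) := by
      rw [PiLp.sub_apply, periodVec_apply, Int.fract, mul_sub, mul_div_cancel₀ _ (by positivity)]
    rw [h, Real.norm_of_nonneg (by positivity)]
    exact mul_le_of_le_one_right (by positivity) (Int.fract_lt_one _).le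
  refine ⟨m, ?_⟩
  rw [EuclideanSpace.norm_eq, Fin.sum_univ_two, Real.sqrt_le_iff]
  refine ⟨by positivity, ?_⟩
  nlinarith [hcoord 0, hcoord 1, norm_nonneg ((x - periodVec m) 0),
    norm_nonneg ((x - periodVec m) 1)]

section PeriodicFamily

variable {E : Type*} {F : Plane → ℝ → E} {s : Set ℝ}

theorem exists_forall_norm_le_of_periodic2 [SeminormedAddCommGroup E] (hs : IsCompact s)
    (hF : ContinuousOn (fun p : Plane × ℝ => F p.1 p.2) (univ ×ˢ s))
    (hper : ∀ t ∈ s, Periodic2 (F · t)) : ∃ C, ∀ x, ∀ t ∈ s, ‖F x t‖ ≤ C := by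
  obtain ⟨C, hC⟩ := ((isCompact_closedBall (0 : Plane) (4 * π)).prod hs)
    |>.exists_bound_of_continuousOn (hF.mono (prod_mono (subset_univ _) le_rfl))
  refine ⟨C, fun x t ht => ?_⟩
  obtain ⟨m, hm⟩ := exists_norm_sub_periodVec_le x
  rw [← ((hper t ht).periodic_periodVec m).sub_eq x]
  exact hC (x - periodVec m, t) ⟨mem_closedBall_zero_iff.2 hm, ht⟩

theorem exists_forall_dist_lt_of_periodic2 [PseudoMetricSpace E] (hs : IsCompact s)
    (hF : ContinuousOn (fun p : Plane × ℝ => F p.1 p.2) (univ ×ˢ s))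
    (hper : ∀ t ∈ s, Periodic2 (F · t)) {ε : ℝ} (hε : 0 < ε) :
    ∃ η > 0, ∀ t ∈ s, ∀ t' ∈ s, dist t t' < η → ∀ x, dist (F x t) (F x t') < ε := by
  obtain ⟨η, hη, h⟩ := Metric.uniformContinuousOn_iff.1
    (((isCompact_closedBall (0 : Plane) (4 * π)).prod hs).uniformContinuousOn_of_continuous
      (hF.mono (prod_mono (subset_univ _) le_rfl))) ε hε
  refine ⟨η, hη, fun t ht t' ht' htt' x => ?_⟩
  obtain ⟨m, hm⟩ := exists_norm_sub_periodVec_le x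
  rw [← ((hper t ht).periodic_periodVec m).sub_eq x,
    ← ((hper t' ht').periodic_periodVec m).sub_eq x]
  exact h (x - periodVec m, t) ⟨mem_closedBall_zero_iff.2 hm, ht⟩
    (x - periodVec m, t') ⟨mem_closedBall_zero_iff.2 hm, ht'⟩ (by simpa [Prod.dist_eq] using htt')

end PeriodicFamily

def HasStrictModulus {E : Type*} [SeminormedAddCommGroup E] (ω : ℝ → ℝ) (f : E → ℝ) : Prop :=
  ∀ x y, x ≠ y → |f x - f y| < ω ‖x - y‖

theorem Periodic2.exists_pos_add_le_of_hasStrictModulus {g : Plane → ℝ} {ω : ℝ → ℝ}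
    (hper : Periodic2 g) (hg : Continuous g) (hω : ContinuousOn ω (Ioi 0))
    (hgω : HasStrictModulus ω g) {ξ₀ : ℝ} (hξ₀ : 0 < ξ₀) (R : ℝ) :
    ∃ ε > 0, ∀ x y : Plane, ξ₀ ≤ ‖x - y‖ → ‖x - y‖ ≤ R → |g x - g y| + ε ≤ ω ‖x - y‖ := by
  set S : Set (Plane × Plane) :=
    (closedBall 0 (4 * π) ×ˢ closedBall 0 (4 * π + R)) ∩ {p | ξ₀ ≤ ‖p.1 - p.2‖}
  have hS : IsCompact S := ((isCompact_closedBall _ _).prod (isCompact_closedBall _ _)).inter_right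
    (isClosed_le continuous_const (continuous_fst.sub continuous_snd).norm)
  have hgap : ContinuousOn (fun p : Plane × Plane => ω ‖p.1 - p.2‖ - |g p.1 - g p.2|) S :=
    (hω.comp (continuous_fst.sub continuous_snd).norm.continuousOn
      fun p hp => hξ₀.trans_le hp.2).sub
      ((hg.comp continuous_fst).sub (hg.comp continuous_snd)).abs.continuousOn
  obtain ⟨ε, hε, hS_le⟩ := hS.exists_forall_le' hgap (a := 0) fun p hp => by
    refine sub_pos.2 (hgω _ _ fun h => ?_)
    have hp₂ : ξ₀ ≤ ‖p.1 - p.2‖ := hp.2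
    rw [h, sub_self, norm_zero] at hp₂
    linarith
  refine ⟨ε, hε, fun x y hξ hR => ?_⟩
  obtain ⟨m, hm⟩ := exists_norm_sub_periodVec_le x
  have hxy : (x - periodVec m) - (y - periodVec m) = x - y := sub_sub_sub_cancel_right x y _
  have hy : ‖y - periodVec m‖ ≤ 4 * π + R := calc
    ‖y - periodVec m‖ = ‖(x - periodVec m) - (x - y)‖ := by congr 1; abel
    _ ≤ ‖x - periodVec m‖ + ‖x - y‖ := norm_sub_le _ _
    _ ≤ 4 * π + R := add_le_add hm hR
  have hmargin := hS_le (x - periodVec m, y - periodVec m)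
    ⟨⟨mem_closedBall_zero_iff.2 hm, mem_closedBall_zero_iff.2 hy⟩, by simpa [S, hxy] using hξ⟩
  simp only [hxy, (hper.periodic_periodVec m).sub_eq] at hmargin
  linarith

theorem hasStrictModulus_of_near_medium_far {E : Type*} [NormedAddCommGroup E] [NormedSpace ℝ E]
    {f g : E → ℝ} {ω : ℝ → ℝ} {b C ε ξ₀ R : ℝ}
    (hf : Differentiable ℝ f) (hf' : ∀ z, ‖fderiv ℝ f z‖ ≤ b)
    (hnear : ∀ ξ ∈ Ioo 0 ξ₀, b * ξ < ω ξ)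
    (hC : ∀ z, |f z| ≤ C) (hfar : ∀ ξ ≥ R, 2 * C < ω ξ)
    (hfg : ∀ z, |f z - g z| < ε / 2)
    (hg : ∀ x y, ξ₀ ≤ ‖x - y‖ → ‖x - y‖ ≤ R → |g x - g y| + ε ≤ ω ‖x - y‖) :
    HasStrictModulus ω f := by
  intro x y hxy
  rcases lt_or_ge ‖x - y‖ ξ₀ with hξ₀ | hξ₀
  · calc |f x - f y| ≤ b * ‖x - y‖ := by
          simpa using convex_univ.norm_image_sub_le_of_norm_fderiv_le (fun z _ => hf z)
            (fun z _ => hf' z) (mem_univ y) (mem_univ x)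
      _ < ω ‖x - y‖ := hnear _ ⟨norm_pos_iff.2 (sub_ne_zero.2 hxy), hξ₀⟩
  rcases le_or_gt R ‖x - y‖ with hR | hR
  · calc |f x - f y| ≤ |f x| + |f y| := abs_sub _ _
      _ ≤ 2 * C := by linarith [hC x, hC y]
      _ < ω ‖x - y‖ := hfar _ hR
  · have hgy := hfg y
    rw [abs_sub_comm] at hgy
    calc |f x - f y| ≤ |f x - g x| + |g x - g y| + |g y - f y| :=
          by linarith [abs_sub_le (f x) (g x) (f y), abs_sub_le (g x) (g y) (f y)]
      _ < ε / 2 + |g x - g y| + ε / 2 := by linarith [hfg x]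
      _ ≤ ω ‖x - y‖ := by linarith [hg x y hξ₀ hR.le]

theorem hasStrictModulus_persists {ω : ℝ → ℝ} {B T T₁ : ℝ} {Θ : Plane → ℝ → ℝ}
    (hω : ContinuousOn ω (Ioi 0)) (hω_zero : ∀ b < B, ∀ᶠ ξ in 𝓝[>] 0, b * ξ < ω ξ)
    (hω_top : Tendsto ω atTop atTop) (hT : T ∈ Icc 0 T₁) (hTT₁ : T < T₁)
    (hcont : ContinuousOn (fun p : Plane × ℝ => Θ p.1 p.2) (univ ×ˢ Icc 0 T₁))
    (hper : ∀ t ∈ Icc 0 T₁, Periodic2 (Θ · t))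
    (hdiff : ∀ x, ∀ t ∈ Icc 0 T₁, DifferentiableAt ℝ (Θ · t) x)
    (hgradcont : ContinuousOn (fun p : Plane × ℝ => fderiv ℝ (Θ · p.2) p.1) (univ ×ˢ Icc 0 T₁))
    (hmodT : HasStrictModulus ω (Θ · T)) (hgradT : (⨆ x, ‖fderiv ℝ (Θ · T) x‖) < B) :
    ∃ τ, 0 < τ ∧ τ ≤ T₁ - T ∧ ∀ t ∈ Icc T (T + τ), HasStrictModulus ω (Θ · t) := by
  have hgradper : ∀ t ∈ Icc 0 T₁, Periodic2 (fderiv ℝ (Θ · t)) := fun t ht => (hper t ht).fderiv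
  obtain ⟨C, hC⟩ := exists_forall_norm_le_of_periodic2 isCompact_Icc hcont hper
  obtain ⟨C', hC'⟩ := exists_forall_norm_le_of_periodic2 isCompact_Icc hgradcont hgradper
  set M := ⨆ x, ‖fderiv ℝ (Θ · T) x‖
  have hM (x : Plane) : ‖fderiv ℝ (Θ · T) x‖ ≤ M :=
    le_ciSup ⟨C', forall_mem_range.2 fun x => hC' x T hT⟩ x
  obtain ⟨ξ₀, hξ₀, hnear⟩ :=
    mem_nhdsGT_iff_exists_Ioo_subset.1 (hω_zero ((M + B) / 2) (by linarith))
  obtain ⟨R, hfar⟩ := (hω_top.eventually_gt_atTop (2 * C)).exists_forall_of_atTop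
  have hΘT : Continuous (Θ · T) :=
    hcont.comp_continuous (continuous_id.prodMk continuous_const) fun _ => ⟨mem_univ _, hT⟩
  obtain ⟨ε, hε, hgap⟩ := (hper T hT).exists_pos_add_le_of_hasStrictModulus hΘT hω hmodT hξ₀ R
  obtain ⟨η₁, hη₁, hΘ_close⟩ :=
    exists_forall_dist_lt_of_periodic2 isCompact_Icc hcont hper (half_pos hε)
  obtain ⟨η₂, hη₂, hgrad_close⟩ := exists_forall_dist_lt_of_periodic2 isCompact_Icc hgradcont
    hgradper (show 0 < (B - M) / 2 by linarith)
  refine ⟨min (min η₁ η₂ / 2) (T₁ - T), lt_min (by positivity) (by linarith), min_le_right _ _,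
    fun t ht => ?_⟩
  have ht₀ : t ∈ Icc 0 T₁ :=
    ⟨hT.1.trans ht.1, by linarith [ht.2, min_le_right (min η₁ η₂ / 2) (T₁ - T)]⟩
  have htT : dist t T < min η₁ η₂ := by
    rw [Real.dist_eq, abs_of_nonneg (by linarith [ht.1])]
    linarith [ht.2, min_le_left (min η₁ η₂ / 2) (T₁ - T), lt_min hη₁ hη₂]
  refine hasStrictModulus_of_near_medium_far (fun z => hdiff z t ht₀) (fun z => ?_)
    (fun ξ hξ => hnear hξ) (fun z => hC z t ht₀) (fun ξ hξ => hfar ξ hξ)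
    (fun z => by simpa [Real.dist_eq] using hΘ_close t ht₀ T hT (htT.trans_le (min_le_left _ _)) z)
    hgap
  have hgrad_near := hgrad_close t ht₀ T hT (htT.trans_le (min_le_right _ _)) z
  rw [dist_eq_norm] at hgrad_near
  linarith [norm_le_insert' (fderiv ℝ (Θ · t) z) (fderiv ℝ (Θ · T) z), hM z]

theorem strict_modulus_short_time_persistence
    (γ δ : ℝ) (hγ : 0 < γ) (hγδ : γ ≤ δ)
    (B : ℝ) (hB : 0 < B)
    (T T₁ : ℝ) (hT : 0 ≤ T) (hTT₁ : T < T₁)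
    (Θ : Plane → ℝ → ℝ)
    (hcont : ContinuousOn (fun p : Plane × ℝ => Θ p.1 p.2) (Set.univ ×ˢ Set.Icc 0 T₁))
    (hper : ∀ t ∈ Set.Icc (0:ℝ) T₁, Periodic2 (fun x => Θ x t))
    (hdiff : ∀ x : Plane, ∀ t ∈ Set.Icc (0:ℝ) T₁, DifferentiableAt ℝ (fun y => Θ y t) x)
    (hgradcont : ContinuousOn (fun p : Plane × ℝ => fderiv ℝ (fun y => Θ y p.2) p.1)
      (Set.univ ×ˢ Set.Icc 0 T₁))
    (hmodT : ∀ x y : Plane, x ≠ y → |Θ x T - Θ y T| < qgModulus γ δ (B * ‖x - y‖))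
    (hgradT : (⨆ x : Plane, ‖fderiv ℝ (fun y => Θ y T) x‖) < B) :
    ∃ τ : ℝ, 0 < τ ∧ τ ≤ T₁ - T ∧
      ∀ t ∈ Set.Icc T (T + τ), ∀ x y : Plane, x ≠ y →
        |Θ x t - Θ y t| < qgModulus γ δ (B * ‖x - y‖) := by
  have hδ : 0 < δ := hγ.trans_le hγδ
  refine hasStrictModulus_persists (ω := fun ξ => qgModulus γ δ (B * ξ))
    ((continuous_qgModulus hδ).comp (continuous_const_mul B)).continuousOn (fun b hb => ?_)
    ((tendsto_qgModulus_atTop hγ hδ).comp (tendsto_id.const_mul_atTop hB)) ⟨hT, hTT₁.le⟩ hTT₁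
    hcont hper hdiff hgradcont hmodT hgradT
  filter_upwards [eventually_nhdsGT_zero_mul_left hB
    (eventually_mul_lt_qgModulus (γ := γ) hδ ((div_lt_one hB).2 hb))] with ξ hξ
  rwa [← mul_assoc, div_mul_cancel₀ _ hB.ne'] at hξ
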